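/- arXiv:2509.25372 — 4 statements merged into one kernel-verified Lean document; each statement's English description precedes it below -/
import Mathlib

section
/- With M, Q, and L(y) as above (M(y) = [[y₀+y₃, y₁−i·y₂],[y₁+i·y₂, y₀−y₃]], Q(y) = det(M(y)), L(y) = row span of [I₂ | M(y)] in ℂ⁴): if y ≠ y' and Q(y − y') = 0, then the subspace L(y) ∩ L(y') has dimension exactly 1. -/
open Complex

/-- The identification of complexified momentum space `ℂ⁴` with `2 × 2` complex matrices:
`M(y₀,y₁,y₂,y₃) = [[y₀+y₃, y₁−i·y₂],[y₁+i·y₂, y₀−y₃]]`. -/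
noncomputable def momentumMatrix (y : Fin 4 → ℂ) : Matrix (Fin 2) (Fin 2) ℂ :=
  !![y 0 + y 3, y 1 - Complex.I * y 2; y 1 + Complex.I * y 2, y 0 - y 3]

/-- The Lorentz quadratic form `Q(y) = y₀² − y₁² − y₂² − y₃²`. -/
def lorentzQ (y : Fin 4 → ℂ) : ℂ := y 0 ^ 2 - y 1 ^ 2 - y 2 ^ 2 - y 3 ^ 2

/-- The row span `L(y) ⊆ ℂ⁴` of the `2 × 4` matrix `[I₂ | M(y)]`. -/
noncomputable def lineOf (y : Fin 4 → ℂ) : Submodule ℂ (Fin 4 → ℂ) :=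
  Submodule.span ℂ
    {![1, 0, momentumMatrix y 0 0, momentumMatrix y 0 1],
     ![0, 1, momentumMatrix y 1 0, momentumMatrix y 1 1]}

/-!
`L(y)` is the graph of `a ↦ a M(y)`, so a vector of `L(y) ∩ L(y')` is `(a, a M(y))` with
`a M(y) = a M(y')`, i.e. `a` lies in the left kernel of `M(y) − M(y') = M(y − y')`. This matrix is
nonzero because `y ≠ y'`, and singular because its determinant is `Q(y − y') = 0`; a nonzero
singular `2 × 2` matrix has a one-dimensional left kernel.
-/

namespace Fin

def appendLinearEquiv (R : Type*) [Semiring R] (m n : ℕ) :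
    ((Fin m → R) × (Fin n → R)) ≃ₗ[R] (Fin (m + n) → R) :=
  (LinearEquiv.sumArrowLequivProdArrow (Fin m) (Fin n) R R).symm ≪≫ₗ
    LinearEquiv.funCongrLeft R R finSumFinEquiv.symm

end Fin

namespace LinearMap

variable {R M M₂ : Type*} [Ring R] [AddCommGroup M] [AddCommGroup M₂] [Module R M] [Module R M₂]

theorem graph_inf_graph (f g : M →ₗ[R] M₂) :
    f.graph ⊓ g.graph = (ker (f - g)).map (LinearMap.id.prod f) := by
  ext ⟨x, z⟩
  simp only [Submodule.mem_inf, mem_graph_iff, Submodule.mem_map, mem_ker, sub_apply,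
    sub_eq_zero, prod_apply]
  constructor
  · rintro ⟨hf, hg⟩
    exact ⟨x, hf ▸ hg, Prod.ext rfl hf.symm⟩
  · rintro ⟨x, hfg, h⟩
    obtain ⟨rfl, rfl⟩ := Prod.mk.inj h
    exact ⟨rfl, hfg⟩

theorem finrank_graph_inf_graph (f g : M →ₗ[R] M₂) :
    Module.finrank R ↥(f.graph ⊓ g.graph) = Module.finrank R ↥(ker (f - g)) := by
  rw [graph_inf_graph]
  exact (Submodule.equivMapOfInjective _ (fun _ _ h => congrArg Prod.fst h) _).finrank_eq.symm

end LinearMap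

namespace Matrix

theorem vecMulLinear_sub {R m n : Type*} [Ring R] [Fintype m] (A B : Matrix m n R) :
    (A - B).vecMulLinear = A.vecMulLinear - B.vecMulLinear :=
  LinearMap.ext fun v => vecMul_sub A B v

theorem finrank_ker_vecMulLinear_eq_one {K : Type*} [Field K] {A : Matrix (Fin 2) (Fin 2) K}
    (hA : A ≠ 0) (hdet : A.det = 0) : Module.finrank K ↥(LinearMap.ker A.vecMulLinear) = 1 := by
  have hbot : LinearMap.ker A.vecMulLinear ≠ ⊥ := by
    obtain ⟨v, hv, hvA⟩ := exists_vecMul_eq_zero_iff.mpr hdet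
    exact (Submodule.ne_bot_iff _).mpr ⟨v, hvA, hv⟩
  have htop : LinearMap.ker A.vecMulLinear ≠ ⊤ := by
    intro h
    refine hA (ext fun i j => ?_)
    have hi : Pi.single i 1 ᵥ* A = 0 := LinearMap.mem_ker.mp (h ▸ Submodule.mem_top)
    simpa [single_one_vecMul] using congrFun hi j
  have hle := Submodule.one_le_finrank_iff.mpr hbot
  have hlt := Submodule.finrank_lt htop
  rw [Module.finrank_fin_fun] at hlt
  omega

end Matrix

theorem momentumMatrix_sub (y y' : Fin 4 → ℂ) :
    momentumMatrix (y - y') = momentumMatrix y - momentumMatrix y' := by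
  ext i j
  fin_cases i <;> fin_cases j <;>
    simp [momentumMatrix, mul_sub, add_sub_add_comm, sub_sub_sub_comm]

theorem det_momentumMatrix (y : Fin 4 → ℂ) : (momentumMatrix y).det = lorentzQ y := by
  rw [momentumMatrix, Matrix.det_fin_two_of, lorentzQ]
  linear_combination y 2 ^ 2 * I_sq

theorem momentumMatrix_eq_zero_iff {y : Fin 4 → ℂ} : momentumMatrix y = 0 ↔ y = 0 := by
  refine ⟨fun h => ?_, ?_⟩
  · have e00 : y 0 + y 3 = 0 := by simpa [momentumMatrix] using congrFun₂ h 0 0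
    have e01 : y 1 - I * y 2 = 0 := by simpa [momentumMatrix] using congrFun₂ h 0 1
    have e10 : y 1 + I * y 2 = 0 := by simpa [momentumMatrix] using congrFun₂ h 1 0
    have e11 : y 0 - y 3 = 0 := by simpa [momentumMatrix] using congrFun₂ h 1 1
    have h0 : y 0 = 0 := by linear_combination (e00 + e11) / 2
    have h1 : y 1 = 0 := by linear_combination (e01 + e10) / 2
    have h2 : y 2 = 0 := by linear_combination (I / 2) * (e01 - e10) + y 2 * I_sq
    have h3 : y 3 = 0 := by linear_combination (e00 - e11) / 2
    ext i
    fin_cases i <;> assumption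
  · rintro rfl
    ext i j
    fin_cases i <;> fin_cases j <;> simp [momentumMatrix]

theorem lineOf_eq_map_graph (y : Fin 4 → ℂ) :
    lineOf y = (momentumMatrix y).vecMulLinear.graph.map
      (Fin.appendLinearEquiv ℂ 2 2 : ((Fin 2 → ℂ) × (Fin 2 → ℂ)) →ₗ[ℂ] (Fin 4 → ℂ)) := by
  rw [LinearMap.graph_eq_range_prod, ← LinearMap.range_comp]
  have hrows : (Fin.appendLinearEquiv ℂ 2 2).toLinearMap ∘ₗ
      LinearMap.id.prod (momentumMatrix y).vecMulLinear =
      Fintype.linearCombination ℂ ![![1, 0, momentumMatrix y 0 0, momentumMatrix y 0 1],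
        ![0, 1, momentumMatrix y 1 0, momentumMatrix y 1 1]] := by
    refine LinearMap.pi_ext' fun i => LinearMap.ext_ring ?_
    simp only [LinearMap.comp_apply, LinearMap.coe_single, Fintype.linearCombination_apply_single,
      one_smul, LinearEquiv.coe_coe, LinearMap.prod_apply, LinearMap.id_apply, Function.prod_apply,
      Matrix.vecMulLinear_apply, Matrix.single_one_vecMul]
    fin_cases i <;> ext k <;> fin_cases k <;> rfl
  rw [hrows, Fintype.range_linearCombination, Matrix.range_cons_cons_empty, lineOf]

/-- Well-definedness of momentum twistors: if `y ≠ y'` and `Q(y − y') = 0`, then the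
intersection `L(y) ∩ L(y')` is one-dimensional, i.e. the two lines in `ℙ³` meet in a
single point. -/
theorem finrank_lineOf_inf (y y' : Fin 4 → ℂ) (hne : y ≠ y')
    (hQ : lorentzQ (y - y') = 0) :
    Module.finrank ℂ ↥(lineOf y ⊓ lineOf y') = 1 := by
  have hN : momentumMatrix (y - y') ≠ 0 := by
    rwa [Ne, momentumMatrix_eq_zero_iff, sub_eq_zero]
  have hdet : (momentumMatrix (y - y')).det = 0 := by
    rwa [det_momentumMatrix]
  rw [lineOf_eq_map_graph, lineOf_eq_map_graph, ← Submodule.map_inf _ (LinearEquiv.injective _),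
    LinearEquiv.finrank_map_eq, LinearMap.finrank_graph_inf_graph, ← Matrix.vecMulLinear_sub,
    ← momentumMatrix_sub]
  exact Matrix.finrank_ker_vecMulLinear_eq_one hN hdet
end

section
/- Let C ⊆ ℝⁿ be a closed convex cone that is pointed, i.e., C ∩ (−C) = {0}. Let y belong to the interior of the dual cone C* = {y ∈ ℝⁿ : ⟨x, y⟩ ≥ 0 for all x ∈ C}. Then the function x ↦ exp(−⟨x, y⟩) is integrable on C with respect to Lebesgue measure on ℝⁿ. -/
/-!
If `y` is interior to the dual cone, then `y - c • s` stays in the dual cone for `c > 0` small and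
every sign vector `s`. Choosing `s` to be the sign pattern of `x ∈ C` gives
`c * ‖x‖₁ ≤ ⟪x, y⟫` on `C`, so `exp (-⟪x, y⟫)` is dominated on `C` by `∏ k, exp (-c * |x k|)`,
a product of integrable functions of one variable.
-/

open MeasureTheory Set

theorem integrable_comp_abs_of_integrableOn_Ioi {E : Type*} [NormedAddCommGroup E] {f : ℝ → E}
    (hf : IntegrableOn f (Ioi 0)) : Integrable fun x => f |x| := by
  have hIoi : IntegrableOn (fun x => f |x|) (Ioi 0) :=
    hf.congr_fun (fun x hx => by rw [abs_of_pos hx]) measurableSet_Ioi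
  have hIic : IntegrableOn (fun x => f |x|) (Iic 0) := by
    rw [← (Measure.measurePreserving_neg (volume : Measure ℝ)).integrableOn_comp_preimage
      (Homeomorph.neg ℝ).measurableEmbedding]
    simp only [Function.comp_def, abs_neg, neg_preimage, neg_Iic, neg_zero]
    exact (integrableOn_Ici_iff_integrableOn_Ioi).mpr hIoi
  simpa [Iic_union_Ioi] using hIic.union hIoi

theorem integrable_exp_neg_mul_abs {c : ℝ} (hc : 0 < c) :
    Integrable fun x : ℝ => Real.exp (-c * |x|) :=
  integrable_comp_abs_of_integrableOn_Ioi (exp_neg_integrableOn_Ioi 0 hc)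

theorem integrable_exp_neg_mul_sum_abs {ι : Type*} [Fintype ι] {c : ℝ} (hc : 0 < c) :
    Integrable fun x : ι → ℝ => Real.exp (-c * ∑ k, |x k|) := by
  simp_rw [Finset.mul_sum, Real.exp_sum]
  exact Integrable.fintype_prod fun _ => integrable_exp_neg_mul_abs hc

theorem integrableOn_exp_neg_of_mul_sum_abs_le {ι : Type*} [Fintype ι] {S : Set (ι → ℝ)}
    {g : (ι → ℝ) → ℝ} (hg : Measurable g) {c : ℝ} (hc : 0 < c)
    (hle : ∀ x ∈ S, c * ∑ k, |x k| ≤ g x) : IntegrableOn (fun x => Real.exp (-g x)) S := by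
  -- `S` need not be measurable, so dominate on the measurable superset `K` instead.
  set K := {x : ι → ℝ | c * ∑ k, |x k| ≤ g x}
  have hK : MeasurableSet K := measurableSet_le (by fun_prop) hg
  refine IntegrableOn.mono_set ?_ (show S ⊆ K from hle)
  refine (integrable_exp_neg_mul_sum_abs hc).integrableOn.mono' hg.neg.exp.aestronglyMeasurable
    ((ae_restrict_iff' hK).mpr (Filter.Eventually.of_forall fun x hx => ?_))
  rw [Real.norm_of_nonneg (Real.exp_pos _).le, Real.exp_le_exp, neg_mul]
  exact neg_le_neg hx

theorem exists_pos_mul_sum_abs_le_of_mem_interior_dual {ι : Type*} [Fintype ι]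
    {S : Set (ι → ℝ)} {y : ι → ℝ}
    (hy : y ∈ interior {y : ι → ℝ | ∀ x ∈ S, 0 ≤ ∑ k, x k * y k}) :
    ∃ c > 0, ∀ x ∈ S, c * ∑ k, |x k| ≤ ∑ k, x k * y k := by
  obtain ⟨ε, hε, hball⟩ := Metric.mem_nhds_iff.mp (mem_interior_iff_mem_nhds.mp hy)
  refine ⟨ε / 2, by positivity, fun x hx => ?_⟩
  set s : ι → ℝ := fun k => SignType.sign (x k)
  have hs : ‖s‖ ≤ 1 := (pi_norm_le_iff_of_nonneg zero_le_one).mpr fun k => by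
    rcases lt_trichotomy (x k) 0 with h | h | h <;> simp [s, h]
  have hmem : y - (ε / 2) • s ∈ Metric.ball y ε := by
    rw [mem_ball_iff_norm, sub_sub_cancel_left, norm_neg, norm_smul,
      Real.norm_of_nonneg (by positivity)]
    calc ε / 2 * ‖s‖ ≤ ε / 2 * 1 := by gcongr
      _ < ε := by linarith
  have hdual : 0 ≤ ∑ k, x k * (y - (ε / 2) • s) k := hball hmem x hx
  have hexpand : ∑ k, x k * (y - (ε / 2) • s) k = ∑ k, x k * y k - ε / 2 * ∑ k, |x k| := by
    simp only [Pi.sub_apply, Pi.smul_apply, smul_eq_mul, mul_sub, Finset.sum_sub_distrib,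
      Finset.mul_sum, s]
    congr 1
    refine Finset.sum_congr rfl fun k _ => ?_
    rw [mul_left_comm, self_mul_sign]
  linarith

theorem integrable_exp_neg_inner_pointed_cone_general (n : ℕ) (C : Set (Fin n → ℝ))
    (y : Fin n → ℝ)
    (hy : y ∈ interior {y : Fin n → ℝ | ∀ x ∈ C, 0 ≤ ∑ k, x k * y k}) :
    IntegrableOn (fun x : Fin n → ℝ => Real.exp (-(∑ k, x k * y k))) C volume := by
  obtain ⟨c, hc, hle⟩ := exists_pos_mul_sum_abs_le_of_mem_interior_dual hy
  exact integrableOn_exp_neg_of_mul_sum_abs_le (by fun_prop) hc hle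

/-- Convergence of the Laplace transform of a pointed closed convex cone: if
`C ⊆ ℝⁿ` is a closed convex cone with `C ∩ (−C) = {0}` and `y` lies in the interior of
the dual cone `C* = {y : ⟨x, y⟩ ≥ 0 for all x ∈ C}`, then `x ↦ exp(−⟨x, y⟩)` is
integrable on `C`. -/
theorem integrable_exp_neg_inner_pointed_cone (n : ℕ) (C : Set (Fin n → ℝ))
    (hclosed : IsClosed C) (hconv : Convex ℝ C)
    (hcone : ∀ x ∈ C, ∀ t : ℝ, 0 ≤ t → t • x ∈ C)
    (hpointed : C ∩ (-C) = {0}) (y : Fin n → ℝ)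
    (hy : y ∈ interior {y : Fin n → ℝ | ∀ x ∈ C, 0 ≤ ∑ k, x k * y k}) :
    IntegrableOn (fun x : Fin n → ℝ => Real.exp (-(∑ k, x k * y k))) C volume :=
  integrable_exp_neg_inner_pointed_cone_general n C y hy
end

section
/- Let P ⊂ ℝ^d be a full-dimensional convex polytope (the convex hull of finitely many points, with nonempty interior). Then there exist polynomials p, q ∈ ℝ[x₁,…,x_d], with q nonvanishing on the interior of P, such that for every x in the interior of P, the Lebesgue volume of the polar body (P − x)^∨ = {u ∈ ℝ^d : ⟨c − x, u⟩ ≤ 1 for all c ∈ P} equals p(x)/q(x). -/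
/-!
Cut `ℝ^d` into simplicial cones `E i '' Ici 0`, overlapping only in null sets, such that every
difference `v - w` of vertices of `P` has constant sign on each cone; such a fan is obtained by
repeatedly splitting orthants with shears. On the `i`-th cone a single vertex `v i` maximises
`⟨·, u⟩` over `P`, so the polar body meets the cone in the simplex
`E i '' {y ≥ 0 | ∑ⱼ Tᵢⱼ yⱼ ≤ 1}` with `Tᵢⱼ = ⟨v i - x, E i eⱼ⟩`, which is positive for `x` in
the interior. Its volume is `|det E i| / ∏ⱼ Tᵢⱼ` times that of the standard simplex
`cornerSimplex 1`, and summing over the cones gives a sum of reciprocals of products of affine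
functions of `x`.
-/

open MeasureTheory Set Matrix

namespace PolarVolume

universe u

variable {n : Type u}

theorem image_trans {R M : Type*} [Semiring R] [AddCommMonoid M] [Module R M] (F E : M ≃ₗ[R] M)
    (s : Set M) : F.trans E '' s = E '' (F '' s) := by
  rw [image_image]
  rfl

section

variable [Fintype n]

theorem volume_image_linearEquiv (E : (n → ℝ) ≃ₗ[ℝ] (n → ℝ)) (s : Set (n → ℝ)) :
    volume (E '' s) = ENNReal.ofReal |LinearMap.det (E : (n → ℝ) →ₗ[ℝ] (n → ℝ))| * volume s :=
  Measure.addHaar_image_linearMap volume (E : (n → ℝ) →ₗ[ℝ] (n → ℝ)) s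

theorem volume_image_linearEquiv_eq_zero (E : (n → ℝ) ≃ₗ[ℝ] (n → ℝ)) {s : Set (n → ℝ)}
    (hs : volume s = 0) : volume (E '' s) = 0 := by
  rw [volume_image_linearEquiv, hs, mul_zero]

theorem volume_setOf_eq_zero {f : (n → ℝ) →ₗ[ℝ] ℝ} (hf : f ≠ 0) : volume {y | f y = 0} = 0 :=
  Measure.addHaar_submodule volume (LinearMap.ker f) (by rwa [Ne, LinearMap.ker_eq_top])

theorem measurableSet_image_Ici (E : (n → ℝ) ≃ₗ[ℝ] (n → ℝ)) : MeasurableSet (E '' Ici 0) := by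
  rw [LinearEquiv.image_eq_preimage_symm]
  exact measurableSet_Ici.preimage
    (E.symm : (n → ℝ) →ₗ[ℝ] (n → ℝ)).continuous_of_finiteDimensional.measurable

def SignConstantOn (b : n → ℝ) (s : Set (n → ℝ)) : Prop :=
  (∀ y ∈ s, 0 ≤ b ⬝ᵥ y) ∨ ∀ y ∈ s, b ⬝ᵥ y ≤ 0

theorem SignConstantOn.mono {b : n → ℝ} {s t : Set (n → ℝ)} (h : SignConstantOn b t)
    (hst : s ⊆ t) : SignConstantOn b s :=
  h.imp (fun h y hy => h y (hst hy)) fun h y hy => h y (hst hy)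

theorem signConstantOn_image_iff {b b' : n → ℝ} {f : (n → ℝ) → n → ℝ}
    (h : ∀ y, b ⬝ᵥ f y = b' ⬝ᵥ y) (s : Set (n → ℝ)) :
    SignConstantOn b (f '' s) ↔ SignConstantOn b' s := by
  simp only [SignConstantOn, forall_mem_image, h]

theorem signConstantOn_Ici {a : n → ℝ} (ha : 0 ≤ a ∨ a ≤ 0) : SignConstantOn a (Ici 0) := by
  refine ha.imp (fun ha y hy => dotProduct_nonneg_of_nonneg ha hy) fun ha y hy => ?_
  simpa [neg_dotProduct] using dotProduct_nonneg_of_nonneg (neg_nonneg.2 ha) hy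

structure IsConeSubdivision {κ : Type*} (s : Set (n → ℝ)) (E : κ → (n → ℝ) ≃ₗ[ℝ] (n → ℝ)) :
    Prop where
  cone_subset : ∀ i, E i '' Ici 0 ⊆ s
  ae_cover : volume (s \ ⋃ i, E i '' Ici 0) = 0
  aedisjoint : Pairwise fun i j => AEDisjoint volume (E i '' Ici 0) (E j '' Ici 0)

theorem isConeSubdivision_refl :
    IsConeSubdivision (Ici 0) fun _ : PUnit => LinearEquiv.refl ℝ (n → ℝ) where
  cone_subset _ := (image_id _).subset
  ae_cover := by
    rw [iUnion_const, show ⇑(LinearEquiv.refl ℝ (n → ℝ)) = id from rfl, image_id, sdiff_self,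
      measure_empty]
  aedisjoint := Subsingleton.pairwise

theorem IsConeSubdivision.sigma {κ : Type*} [Countable κ] {κ' : κ → Type*}
    [∀ i, Countable (κ' i)] {s : Set (n → ℝ)} {E : κ → (n → ℝ) ≃ₗ[ℝ] (n → ℝ)}
    {F : ∀ i, κ' i → (n → ℝ) ≃ₗ[ℝ] (n → ℝ)} (hE : IsConeSubdivision s E)
    (hF : ∀ i, IsConeSubdivision (Ici 0) (F i)) :
    IsConeSubdivision s fun p : Σ i, κ' i => (F p.1 p.2).trans (E p.1) where
  cone_subset := by
    rintro ⟨i, j⟩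
    rw [image_trans]
    exact (image_mono ((hF i).cone_subset j)).trans (hE.cone_subset i)
  ae_cover := by
    refine measure_mono_null ?_ (measure_union_null hE.ae_cover
      (measure_iUnion_null fun i => volume_image_linearEquiv_eq_zero (E i) (hF i).ae_cover))
    rintro y ⟨hys, hy⟩
    by_cases hyE : y ∈ ⋃ i, E i '' Ici 0
    · obtain ⟨i, z, hz, rfl⟩ := mem_iUnion.1 hyE
      refine Or.inr (mem_iUnion.2 ⟨i, z, ⟨hz, fun hzF => hy ?_⟩, rfl⟩)
      obtain ⟨j, hj⟩ := mem_iUnion.1 hzF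
      exact mem_iUnion.2 ⟨⟨i, j⟩, by rw [image_trans]; exact mem_image_of_mem _ hj⟩
    · exact Or.inl ⟨hys, hyE⟩
  aedisjoint := by
    rintro ⟨i, j⟩ ⟨i', j'⟩ hne
    simp only [image_trans]
    by_cases hi : i = i'
    · subst hi
      have hj : j ≠ j' := fun h => hne (h ▸ rfl)
      rw [AEDisjoint, ← image_inter (E i).injective]
      exact volume_image_linearEquiv_eq_zero (E i) ((hF i).aedisjoint hj)
    · exact (hE.aedisjoint hi).mono (image_mono ((hF i).cone_subset j))
        (image_mono ((hF i').cone_subset j'))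

theorem IsConeSubdivision.volume_eq_sum {κ : Type*} [Fintype κ]
    {E : κ → (n → ℝ) ≃ₗ[ℝ] (n → ℝ)} (hE : IsConeSubdivision univ E) {Q : Set (n → ℝ)}
    (hQ : NullMeasurableSet Q) : volume Q = ∑ i, volume (Q ∩ E i '' Ici 0) := by
  rw [← measure_inter_conull (t := ⋃ i, E i '' Ici 0)
      (by rw [compl_eq_univ_sdiff]; exact hE.ae_cover), inter_iUnion,
    measure_iUnion₀ (fun i j hij => (hE.aedisjoint hij).mono inter_subset_right inter_subset_right)
      fun i => hQ.inter (measurableSet_image_Ici (E i)).nullMeasurableSet, tsum_fintype]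

end

section

variable [DecidableEq n]

def shear {i j : n} (hij : i ≠ j) (c : ℝ) : (n → ℝ) ≃ₗ[ℝ] (n → ℝ) :=
  LinearEquiv.transvection (f := c • LinearMap.proj j) (v := Pi.single i 1) (by simp [hij.symm])

theorem shear_apply {i j : n} (hij : i ≠ j) (c : ℝ) (y : n → ℝ) :
    shear hij c y = y + Pi.single i (c * y j) := by
  rw [shear, LinearEquiv.transvection.apply]
  ext k
  simp [Pi.single_apply]

theorem shear_symm_apply {i j : n} (hij : i ≠ j) (c : ℝ) (y : n → ℝ) :
    (shear hij c).symm y = y - Pi.single i (c * y j) := by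
  rw [LinearEquiv.symm_apply_eq, shear_apply]
  simp [hij.symm]

theorem shear_image_Ici {i j : n} (hij : i ≠ j) {c : ℝ} (hc : 0 ≤ c) :
    shear hij c '' Ici 0 = {y | 0 ≤ y ∧ c * y j ≤ y i} := by
  ext y
  simp only [LinearEquiv.image_eq_preimage_symm, mem_preimage, mem_Ici, shear_symm_apply,
    mem_ofPred_eq, Pi.le_def, Pi.zero_apply, Pi.sub_apply]
  constructor
  · intro hy
    have hyj : 0 ≤ y j := by simpa [Pi.single_apply, hij.symm] using hy j
    have hyi : c * y j ≤ y i := by simpa using hy i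
    refine ⟨fun k => ?_, hyi⟩
    rcases eq_or_ne k i with rfl | hk
    · exact (mul_nonneg hc hyj).trans hyi
    · simpa [Pi.single_apply, hk] using hy k
  · rintro ⟨hy, hyi⟩ k
    rcases eq_or_ne k i with rfl | hk
    · simpa using hyi
    · simpa [Pi.single_apply, hk] using hy k

def reflect (s : Finset n) : (n → ℝ) ≃ₗ[ℝ] (n → ℝ) :=
  LinearEquiv.piCongrRight fun k => if k ∈ s then LinearEquiv.neg ℝ else LinearEquiv.refl ℝ ℝ

theorem reflect_apply (s : Finset n) (y : n → ℝ) (k : n) :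
    reflect s y k = if k ∈ s then -y k else y k := by
  simp only [reflect, LinearEquiv.piCongrRight_apply]
  split_ifs <;> rfl

theorem reflect_image_Ici (s : Finset n) : reflect s '' Ici 0 = reflect s ⁻¹' Ici 0 := by
  have hsymm : (reflect s).symm = reflect s := by
    ext y : 1
    rw [LinearEquiv.symm_apply_eq]
    ext k
    simp only [reflect_apply]
    split_ifs <;> simp
  rw [LinearEquiv.image_eq_preimage_symm, hsymm]

variable [Fintype n]

theorem dotProduct_apply_eq (b : n → ℝ) (f : (n → ℝ) →ₗ[ℝ] (n → ℝ)) (y : n → ℝ) :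
    b ⬝ᵥ f y = (fun j => b ⬝ᵥ f (Pi.single j 1)) ⬝ᵥ y := by
  conv_lhs => rw [← LinearMap.toMatrix'_mulVec f, dotProduct_mulVec]
  congr 1

theorem dotProduct_shear {i j : n} (hij : i ≠ j) (c : ℝ) (b y : n → ℝ) :
    b ⬝ᵥ shear hij c y = b ⬝ᵥ y + b i * c * y j := by
  rw [shear_apply, dotProduct_add, dotProduct_single, mul_assoc]

theorem update_zero_dotProduct (a y : n → ℝ) (j : n) :
    Function.update a j 0 ⬝ᵥ y = a ⬝ᵥ y - a j * y j := by
  rw [show Function.update a j 0 = a - Pi.single j (a j) by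
      ext k; by_cases hk : k = j <;> simp [hk],
    sub_dotProduct, single_dotProduct]

theorem ncard_support_update_zero_lt {a : n → ℝ} {j : n} (hj : a j ≠ 0) :
    (Function.support (Function.update a j 0)).ncard < (Function.support a).ncard := by
  rw [Function.support_update_zero]
  exact ncard_sdiff_singleton_lt_of_mem hj

theorem isConeSubdivision_shear {i j : n} (hij : i ≠ j) {c : ℝ} (hc : 0 < c) :
    IsConeSubdivision (Ici 0) fun b : Bool => bif b then shear hij c else shear hij.symm c⁻¹ where
  cone_subset b := by
    cases b <;>
      simp only [cond_true, cond_false, shear_image_Ici _ hc.le,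
        shear_image_Ici _ (inv_pos.2 hc).le] <;>
      exact fun y hy => hy.1
  ae_cover := by
    refine measure_mono_null (fun y ⟨hy, hyc⟩ => hyc ?_) measure_empty
    rcases le_total (c * y j) (y i) with h | h
    · exact mem_iUnion.2 ⟨true, by rw [cond_true, shear_image_Ici _ hc.le]; exact ⟨hy, h⟩⟩
    · refine mem_iUnion.2 ⟨false, ?_⟩
      rw [cond_false, shear_image_Ici _ (inv_pos.2 hc).le]
      exact ⟨hy, by rwa [inv_mul_le_iff₀ hc]⟩
  aedisjoint := by
    have h : AEDisjoint volume (shear hij c '' Ici 0) (shear hij.symm c⁻¹ '' Ici 0) := by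
      rw [shear_image_Ici _ hc.le, shear_image_Ici _ (inv_pos.2 hc).le]
      refine measure_mono_null (fun y ⟨⟨_, h⟩, ⟨_, h'⟩⟩ => ?_)
        (volume_setOf_eq_zero (f := LinearMap.proj i - c • LinearMap.proj j) fun h => ?_)
      · rw [inv_mul_le_iff₀ hc] at h'
        change y i - c * y j = 0
        linarith
      · simpa [hij.symm] using LinearMap.congr_fun h (Pi.single i 1)
    rintro (_ | _) (_ | _) hb
    · exact absurd rfl hb
    · exact h.symm
    · exact h
    · exact absurd rfl hb

theorem isConeSubdivision_reflect :
    IsConeSubdivision univ (reflect : Finset n → (n → ℝ) ≃ₗ[ℝ] (n → ℝ)) where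
  cone_subset _ := subset_univ _
  ae_cover := by
    refine measure_mono_null (fun y ⟨_, hy⟩ => hy ?_) measure_empty
    refine mem_iUnion.2 ⟨Finset.univ.filter (y · < 0), ?_⟩
    rw [reflect_image_Ici, mem_preimage, mem_Ici, Pi.le_def]
    intro k
    rw [Pi.zero_apply, reflect_apply]
    split_ifs with hk
    · linarith [(Finset.mem_filter.1 hk).2]
    · simpa using hk
  aedisjoint s s' hss' := by
    obtain ⟨k, hk⟩ : ∃ k, ¬(k ∈ s ↔ k ∈ s') := by
      by_contra! h
      exact hss' (Finset.ext h)
    have hk0 : volume {y : n → ℝ | y k = 0} = 0 :=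
      volume_setOf_eq_zero (f := LinearMap.proj k) fun h => by
        simpa using LinearMap.congr_fun h (Pi.single k 1)
    refine measure_mono_null (fun y ⟨hy, hy'⟩ => ?_) hk0
    rw [reflect_image_Ici, mem_preimage, mem_Ici, Pi.le_def] at hy hy'
    have h := hy k
    have h' := hy' k
    rw [Pi.zero_apply, reflect_apply] at h h'
    change y k = 0
    split_ifs at h h' <;> first | linarith | tauto

theorem exists_isConeSubdivision_Ici (a : n → ℝ) :
    ∃ (κ : Type u) (_ : Fintype κ) (E : κ → (n → ℝ) ≃ₗ[ℝ] (n → ℝ)),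
      IsConeSubdivision (Ici 0) E ∧ ∀ l, SignConstantOn a (E l '' Ici 0) := by
  induction hk : (Function.support a).ncard using Nat.strong_induction_on generalizing a with
  | _ k ih =>
  by_cases ha : 0 ≤ a ∨ a ≤ 0
  · exact ⟨PUnit, inferInstance, _, isConeSubdivision_refl,
      fun l => (signConstantOn_Ici ha).mono (isConeSubdivision_refl.cone_subset l)⟩
  obtain ⟨i, hi⟩ : ∃ i, a i < 0 := by simpa [Pi.le_def] using (not_or.1 ha).1
  obtain ⟨j, hj⟩ : ∃ j, 0 < a j := by simpa [Pi.le_def] using (not_or.1 ha).2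
  have hij : i ≠ j := by rintro rfl; linarith
  obtain ⟨c, hc, hac⟩ : ∃ c, 0 < c ∧ a j = -(c * a i) :=
    ⟨-a j / a i, div_pos_of_neg_of_neg (by linarith) hi, by rw [div_mul_cancel₀ _ hi.ne, neg_neg]⟩
  -- The halves `c y_j ≤ y_i` and `y_i ≤ c y_j` of the orthant are its images under shears along
  -- which `a` pulls back to `a` with the `j`-th, resp. `i`-th, entry erased.
  have hhalf : ∀ b : Bool, ∃ (κ : Type u) (_ : Fintype κ) (F : κ → (n → ℝ) ≃ₗ[ℝ] (n → ℝ)),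
      IsConeSubdivision (Ici 0) F ∧ ∀ l, SignConstantOn a
        (⇑(bif b then shear hij c else shear hij.symm c⁻¹) '' (F l '' Ici 0)) := by
    rintro (_ | _)
    · obtain ⟨κ, _, F, hF, hFa⟩ := ih _ (hk ▸ ncard_support_update_zero_lt hi.ne) _ rfl
      refine ⟨κ, inferInstance, F, hF, fun l =>
        (signConstantOn_image_iff (fun y => ?_) _).2 (hFa l)⟩
      rw [cond_false, dotProduct_shear, update_zero_dotProduct, hac]
      field_simp
      ring
    · obtain ⟨κ, _, F, hF, hFa⟩ := ih _ (hk ▸ ncard_support_update_zero_lt hj.ne') _ rfl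
      refine ⟨κ, inferInstance, F, hF, fun l =>
        (signConstantOn_image_iff (fun y => ?_) _).2 (hFa l)⟩
      rw [cond_true, dotProduct_shear, update_zero_dotProduct, hac]
      ring
  choose κ _ F hF hFa using hhalf
  refine ⟨Σ b, κ b, inferInstance, _, (isConeSubdivision_shear hij hc).sigma hF, ?_⟩
  rintro ⟨b, l⟩
  rw [image_trans]
  exact hFa b l

theorem exists_isConeSubdivision_univ (B : Finset (n → ℝ)) :
    ∃ (κ : Type u) (_ : Fintype κ) (E : κ → (n → ℝ) ≃ₗ[ℝ] (n → ℝ)),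
      IsConeSubdivision univ E ∧ ∀ b ∈ B, ∀ l, SignConstantOn b (E l '' Ici 0) := by
  induction B using Finset.induction_on with
  | empty => exact ⟨Finset n, inferInstance, reflect, isConeSubdivision_reflect, by simp⟩
  | insert b B _ ih =>
    obtain ⟨κ, _, E, hE, hB⟩ := ih
    choose κ' _ F hF hFb using
      fun i => exists_isConeSubdivision_Ici fun j => b ⬝ᵥ E i (Pi.single j 1)
    refine ⟨Σ i, κ' i, inferInstance, _, hE.sigma hF, ?_⟩
    rintro b' hb' ⟨i, l⟩
    rw [image_trans]
    rcases Finset.mem_insert.1 hb' with rfl | hb'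
    · exact (signConstantOn_image_iff (dotProduct_apply_eq b' (E i)) _).2 (hFb i l)
    · exact (hB b' hb' i).mono (image_mono ((hF i).cone_subset l))

end

section

variable [Fintype n]

def cornerSimplex (T : n → ℝ) : Set (n → ℝ) := {y | 0 ≤ y ∧ T ⬝ᵥ y ≤ 1}

theorem volume_cornerSimplex_one_lt_top : volume (cornerSimplex (1 : n → ℝ)) < ⊤ := by
  have hsub : cornerSimplex (1 : n → ℝ) ⊆ Icc 0 1 := fun y ⟨hy, hy1⟩ => ⟨hy, fun k => by
    rw [one_dotProduct] at hy1
    exact (Finset.single_le_sum (fun j _ => hy j) (Finset.mem_univ k)).trans hy1⟩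
  exact (measure_mono hsub).trans_lt isCompact_Icc.measure_lt_top

theorem dotProduct_le_of_mem_convexHull {V : Set (n → ℝ)} {u v : n → ℝ}
    (h : ∀ w ∈ V, w ⬝ᵥ u ≤ v ⬝ᵥ u) : ∀ c ∈ convexHull ℝ V, c ⬝ᵥ u ≤ v ⬝ᵥ u :=
  fun _ hc => convexHull_min h (convex_halfSpace_le (f := (· ⬝ᵥ u))
    ⟨(add_dotProduct · · u), (smul_dotProduct · · u)⟩ (v ⬝ᵥ u)) hc

theorem dotProduct_lt_of_mem_interior {P : Set (n → ℝ)} {x u : n → ℝ} (hx : x ∈ interior P)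
    (hu : u ≠ 0) {M : ℝ} (hM : ∀ c ∈ P, c ⬝ᵥ u ≤ M) : x ⬝ᵥ u < M := by
  have hline : Filter.Tendsto (fun t : ℝ => x + t • u) (nhds 0) (nhds x) := by
    have : Continuous fun t : ℝ => x + t • u := by fun_prop
    simpa using this.tendsto 0
  have hev : ∀ᶠ t in nhdsWithin (0 : ℝ) (Ioi 0), x + t • u ∈ P :=
    (hline.eventually_mem (mem_interior_iff_mem_nhds.1 hx)).filter_mono nhdsWithin_le_nhds
  obtain ⟨t, htP, ht⟩ := (hev.and self_mem_nhdsWithin).exists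
  have hpos : 0 < u ⬝ᵥ u := dotProduct_self_star_pos_iff.2 hu
  have := hM _ htP
  rw [add_dotProduct, smul_dotProduct, smul_eq_mul] at this
  nlinarith [mul_pos (mem_Ioi.1 ht) hpos]

theorem exists_forall_dotProduct_le {V : Finset (n → ℝ)} (hV : V.Nonempty) {C : Set (n → ℝ)}
    (hC : ∀ v ∈ V, ∀ w ∈ V, SignConstantOn (v - w) C) :
    ∃ v ∈ V, ∀ w ∈ V, ∀ y ∈ C, w ⬝ᵥ y ≤ v ⬝ᵥ y := by
  obtain ⟨v, hv, hmax⟩ := V.exists_maximalFor (fun v (y : C) => v ⬝ᵥ y.1) hV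
  refine ⟨v, hv, fun w hw => ?_⟩
  simp only [SignConstantOn, sub_dotProduct, sub_nonneg, sub_nonpos] at hC
  exact (hC v hv w hw).elim id fun h y hy => hmax hw (fun y => h y y.2) ⟨y, hy⟩

theorem isClosed_setOf_forall_sub_dotProduct_le (P : Set (n → ℝ)) (x : n → ℝ) :
    IsClosed {u | ∀ c ∈ P, (c - x) ⬝ᵥ u ≤ 1} := by
  simp only [ofPred_forall]
  exact isClosed_biInter fun c _ =>
    isClosed_le (continuous_const.dotProduct continuous_id) continuous_const

variable [DecidableEq n]

theorem cornerSimplex_eq_image {T : n → ℝ} (hT : ∀ j, 0 < T j) :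
    cornerSimplex T = toLin' (diagonal T⁻¹) '' cornerSimplex 1 := by
  have hdiag : ∀ z, diagonal T⁻¹ *ᵥ z = fun j => (T j)⁻¹ * z j := fun z => by
    ext j; rw [mulVec_diagonal, Pi.inv_apply]
  ext y
  simp only [cornerSimplex, mem_image, toLin'_apply, hdiag, mem_ofPred_eq, Pi.le_def,
    Pi.zero_apply, dotProduct, Pi.one_apply, one_mul]
  constructor
  · rintro ⟨hy, hTy⟩
    refine ⟨fun j => T j * y j, ⟨fun j => mul_nonneg (hT j).le (hy j), hTy⟩, ?_⟩
    ext j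
    rw [inv_mul_cancel_left₀ (hT j).ne']
  · rintro ⟨z, ⟨hz, hz1⟩, rfl⟩
    refine ⟨fun j => mul_nonneg (inv_pos.2 (hT j)).le (hz j), ?_⟩
    simpa only [mul_inv_cancel_left₀ (hT _).ne'] using hz1

theorem volume_cornerSimplex {T : n → ℝ} (hT : ∀ j, 0 < T j) :
    volume (cornerSimplex T) =
      ENNReal.ofReal (∏ j, T j)⁻¹ * volume (cornerSimplex (1 : n → ℝ)) := by
  rw [cornerSimplex_eq_image hT, Measure.addHaar_image_linearMap, LinearMap.det_toLin',
    det_diagonal]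
  simp only [Pi.inv_apply, Finset.prod_inv_distrib]
  rw [abs_of_pos (inv_pos.2 (Finset.prod_pos fun j _ => hT j))]

section Polar

variable {V : Set (n → ℝ)} {v x : n → ℝ} {E : (n → ℝ) ≃ₗ[ℝ] (n → ℝ)}

theorem setOf_forall_sub_dotProduct_le_inter_image_Ici (hv : v ∈ V)
    (hmax : ∀ w ∈ V, ∀ y ∈ E '' Ici 0, w ⬝ᵥ y ≤ v ⬝ᵥ y) :
    {u | ∀ c ∈ convexHull ℝ V, (c - x) ⬝ᵥ u ≤ 1} ∩ E '' Ici 0 =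
      E '' cornerSimplex fun j => (v - x) ⬝ᵥ E (Pi.single j 1) := by
  ext u
  constructor
  · rintro ⟨hu, y, hy, rfl⟩
    exact ⟨y, ⟨hy, (dotProduct_apply_eq _ (E : (n → ℝ) →ₗ[ℝ] (n → ℝ)) y).symm.trans_le
      (hu v (subset_convexHull ℝ V hv))⟩, rfl⟩
  · rintro ⟨y, ⟨hy, hT⟩, rfl⟩
    refine ⟨fun c hc => ?_, y, hy, rfl⟩
    have hc := dotProduct_le_of_mem_convexHull
      (fun w hw => hmax w hw _ (mem_image_of_mem _ hy)) c hc
    have hv := (dotProduct_apply_eq (v - x) (E : (n → ℝ) →ₗ[ℝ] (n → ℝ)) y).trans_le hT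
    rw [LinearEquiv.coe_coe, sub_dotProduct] at hv
    rw [sub_dotProduct]
    linarith

theorem sub_dotProduct_apply_single_pos (hmax : ∀ w ∈ V, ∀ y ∈ E '' Ici 0, w ⬝ᵥ y ≤ v ⬝ᵥ y)
    (hx : x ∈ interior (convexHull ℝ V)) (j : n) : 0 < (v - x) ⬝ᵥ E (Pi.single j 1) := by
  rw [sub_dotProduct, sub_pos]
  refine dotProduct_lt_of_mem_interior hx (by simp) (dotProduct_le_of_mem_convexHull fun w hw => ?_)
  exact hmax w hw _ (mem_image_of_mem _ (Pi.single_nonneg.2 zero_le_one))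

end Polar

theorem volume_setOf_forall_sub_dotProduct_le {κ : Type*} [Fintype κ]
    {E : κ → (n → ℝ) ≃ₗ[ℝ] (n → ℝ)} (hE : IsConeSubdivision univ E) {V : Set (n → ℝ)}
    {v : κ → n → ℝ} (hv : ∀ i, v i ∈ V)
    (hmax : ∀ i, ∀ w ∈ V, ∀ y ∈ E i '' Ici 0, w ⬝ᵥ y ≤ v i ⬝ᵥ y) {x : n → ℝ}
    (hx : x ∈ interior (convexHull ℝ V)) :
    volume {u | ∀ c ∈ convexHull ℝ V, (c - x) ⬝ᵥ u ≤ 1} =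
      ENNReal.ofReal (∑ i, |LinearMap.det (E i : (n → ℝ) →ₗ[ℝ] (n → ℝ))| *
        (volume (cornerSimplex (1 : n → ℝ))).toReal / ∏ j, (v i - x) ⬝ᵥ E i (Pi.single j 1)) := by
  have hT := fun i => sub_dotProduct_apply_single_pos (hmax i) hx
  rw [hE.volume_eq_sum
      (isClosed_setOf_forall_sub_dotProduct_le _ x).measurableSet.nullMeasurableSet,
    ENNReal.ofReal_sum_of_nonneg fun i _ =>
      div_nonneg (by positivity) (Finset.prod_nonneg fun j _ => (hT i j).le)]
  refine Finset.sum_congr rfl fun i _ => ?_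
  rw [setOf_forall_sub_dotProduct_le_inter_image_Ici (hv i) (hmax i), volume_image_linearEquiv,
    volume_cornerSimplex (hT i), ← ENNReal.ofReal_toReal volume_cornerSimplex_one_lt_top.ne,
    ← ENNReal.ofReal_mul (inv_nonneg.2 (Finset.prod_nonneg fun j _ => (hT i j).le)),
    ← ENNReal.ofReal_mul (abs_nonneg _), ENNReal.toReal_ofReal ENNReal.toReal_nonneg]
  congr 1
  ring

end

theorem exists_eval_eq_sub_dotProduct {σ K : Type*} [Fintype σ] [CommRing K] (v g : σ → K) :
    ∃ L : MvPolynomial σ K, ∀ x, MvPolynomial.eval x L = (v - x) ⬝ᵥ g :=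
  ⟨∑ k, (MvPolynomial.C (v k) - MvPolynomial.X k) * MvPolynomial.C (g k), fun x => by
    simp [dotProduct]⟩

theorem exists_eval_div_eval_eq_sum_div {σ K κ : Type*} [Field K] [Fintype κ] {S : Set (σ → K)}
    (a : κ → K) (q : κ → MvPolynomial σ K) (hq : ∀ x ∈ S, ∀ i, MvPolynomial.eval x (q i) ≠ 0) :
    ∃ P Q : MvPolynomial σ K, (∀ x ∈ S, MvPolynomial.eval x Q ≠ 0) ∧
      ∀ x ∈ S, ∑ i, a i / MvPolynomial.eval x (q i) =
        MvPolynomial.eval x P / MvPolynomial.eval x Q := by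
  classical
  refine ⟨∑ i, MvPolynomial.C (a i) * ∏ i' ∈ Finset.univ.erase i, q i', ∏ i, q i,
    fun x hx => ?_, fun x hx => ?_⟩
  · rw [map_prod]
    exact Finset.prod_ne_zero_iff.2 fun i _ => hq x hx i
  · simp only [map_sum, map_mul, map_prod, MvPolynomial.eval_C, Finset.sum_div]
    refine Finset.sum_congr rfl fun i _ => ?_
    rw [← Finset.mul_prod_erase _ _ (Finset.mem_univ i), mul_div_mul_right]
    exact Finset.prod_ne_zero_iff.2 fun i' _ => hq x hx i'

end PolarVolume

open PolarVolume in
/-- The dual volume function of a full-dimensional convex polytope `P ⊂ ℝ^d` is a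
rational function on the interior of `P`: there are polynomials `p, q`, with `q`
nonvanishing on the interior of `P`, such that for every `x` in the interior of `P`,
the Lebesgue volume of the polar body `(P − x)^∨ = {u : ⟨c − x, u⟩ ≤ 1 for all c ∈ P}`
equals `p(x)/q(x)`.  This rational function is the canonical form of `P`. -/
theorem dual_volume_function_rational (d : ℕ) (V : Finset (Fin d → ℝ))
    (P : Set (Fin d → ℝ)) (hP : P = convexHull ℝ (V : Set (Fin d → ℝ)))
    (hfull : (interior P).Nonempty) :
    ∃ p q : MvPolynomial (Fin d) ℝ,
      (∀ x ∈ interior P, MvPolynomial.eval x q ≠ 0) ∧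
      ∀ x ∈ interior P,
        volume {u : Fin d → ℝ | ∀ c ∈ P, ∑ k, (c k - x k) * u k ≤ 1} =
          ENNReal.ofReal (MvPolynomial.eval x p / MvPolynomial.eval x q) := by
  subst hP
  have hV : V.Nonempty := by
    simpa using convexHull_nonempty_iff.1 (hfull.mono interior_subset)
  obtain ⟨κ, _, E, hE, hsign⟩ :=
    exists_isConeSubdivision_univ ((V ×ˢ V).image fun vw => vw.1 - vw.2)
  choose v hvV hvmax using fun i => exists_forall_dotProduct_le hV (C := E i '' Ici 0)
    fun v hv w hw => hsign _ (Finset.mem_image_of_mem _ (Finset.mk_mem_product hv hw)) i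
  choose L hL using fun i j => exists_eval_eq_sub_dotProduct (v i) (E i (Pi.single j 1))
  obtain ⟨p, q, hq, hpq⟩ := exists_eval_div_eval_eq_sum_div
    (S := interior (convexHull ℝ (V : Set (Fin d → ℝ))))
    (fun i => |LinearMap.det (E i : (Fin d → ℝ) →ₗ[ℝ] (Fin d → ℝ))| *
      (volume (cornerSimplex (1 : Fin d → ℝ))).toReal) (fun i => ∏ j, L i j)
    fun x hx i => by
      simpa only [map_prod, hL] using Finset.prod_ne_zero_iff.2 fun j _ =>
        (sub_dotProduct_apply_single_pos (hvmax i) hx j).ne'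
  refine ⟨p, q, hq, fun x hx => ?_⟩
  rw [← hpq x hx]
  simp only [map_prod, hL]
  exact volume_setOf_forall_sub_dotProduct_le hE hvV hvmax hx
end

section
/- Let P₁, …, P_r ⊂ ℝ^d be convex polytopes, and suppose that for every λ = (λ₁,…,λ_r) with all λ_i > 0 the Minkowski sum λ₁P₁ + λ₂P₂ + ⋯ + λ_rP_r contains the origin in its interior. Then there exist polynomials p, q ∈ ℝ[λ₁,…,λ_r], with q nonvanishing on the open positive orthant, such that for all λ ∈ ℝ_{>0}^r, the Lebesgue volume of the polar body (λ₁P₁ + ⋯ + λ_rP_r)^∨ equals p(λ)/q(λ). -/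
/-!
The polar of `Q = ∑ λᵢ Pᵢ` is `{u | h(u) ≤ 1}` for the support function
`h(u) = ∑ λᵢ max_{v ∈ Vᵢ} ⟨v, u⟩`. Sorting the directions `u` by the vertices attaining these
maxima cuts the polar body into a.e.-disjoint pieces `C ∩ {⟨a(λ), u⟩ ≤ 1}`, where the polyhedral
cone `C` does not depend on `λ` and `a(λ)` is linear in `λ`.

It remains to see that `∫_{C ∩ {⟨a, u⟩ ≤ 1}} (1 - ⟨a, u⟩)^k du` is rational in `λ`, by induction
on the dimension. Either `C` lies in a hyperplane, or after a linear change of variables every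
inequality defining `C` reads `t ≥ ⟨v, x⟩` in coordinates `u = (t, x)`. Integrating out `t` leaves
`max(0, 1 - ⟨c, x⟩ - α · max_v ⟨v, x⟩)^(k+1) / (α (k+1))` with `α` linear in `λ`, and splitting
`x`-space according to the maximizing `v` gives integrals of the same shape one dimension lower.
-/

open MeasureTheory Matrix Pointwise

section Cone

variable {ι : Type*} [Fintype ι]

def polyhedralCone (B : Finset (ι → ℝ)) : Set (ι → ℝ) := {u | ∀ b ∈ B, 0 ≤ b ⬝ᵥ u}

def truncatedCone (B : Finset (ι → ℝ)) (a : ι → ℝ) : Set (ι → ℝ) :=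
  polyhedralCone B ∩ {u | a ⬝ᵥ u ≤ 1}

theorem isClosed_polyhedralCone (B : Finset (ι → ℝ)) : IsClosed (polyhedralCone B) := by
  simp only [polyhedralCone, Set.ofPred_forall]
  exact isClosed_biInter fun b _ => isClosed_le continuous_const (by fun_prop)

theorem isClosed_truncatedCone (B : Finset (ι → ℝ)) (a : ι → ℝ) :
    IsClosed (truncatedCone B a) :=
  (isClosed_polyhedralCone B).inter (isClosed_le (by fun_prop) continuous_const)

theorem measurableSet_truncatedCone (B : Finset (ι → ℝ)) (a : ι → ℝ) :
    MeasurableSet (truncatedCone B a) :=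
  (isClosed_truncatedCone B a).measurableSet

theorem polyhedralCone_erase_zero (B : Finset (ι → ℝ)) :
    polyhedralCone (B.erase 0) = polyhedralCone B := by
  ext u
  refine ⟨fun hu b hb => ?_, fun hu b hb => hu b (Finset.mem_of_mem_erase hb)⟩
  rcases eq_or_ne b 0 with rfl | hb0
  · simp
  · exact hu b (Finset.mem_erase.2 ⟨hb0, hb⟩)

theorem mem_polyhedralCone_image_sub {N : Finset (ι → ℝ)} {v x : ι → ℝ} :
    x ∈ polyhedralCone (N.image (v - ·)) ↔ ∀ v' ∈ N, v' ⬝ᵥ x ≤ v ⬝ᵥ x := by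
  simp [polyhedralCone, sub_dotProduct]

theorem smul_mem_polyhedralCone {B : Finset (ι → ℝ)} {c : ℝ} {u : ι → ℝ} (hc : 0 ≤ c)
    (hu : u ∈ polyhedralCone B) : c • u ∈ polyhedralCone B := fun b hb => by
  rw [dotProduct_smul, smul_eq_mul]
  exact mul_nonneg hc (hu b hb)

theorem polyhedralCone_ne_univ [Nonempty ι] {B : Finset (ι → ℝ)} {a : ι → ℝ}
    (ha : ∀ u ∈ polyhedralCone B, u ≠ 0 → 0 < a ⬝ᵥ u) : polyhedralCone B ≠ Set.univ := by
  intro h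
  obtain ⟨u, hu⟩ := exists_ne (0 : ι → ℝ)
  have h₁ := ha u (h ▸ trivial) hu
  have h₂ := ha (-u) (h ▸ trivial) (neg_ne_zero.2 hu)
  rw [dotProduct_neg] at h₂
  linarith

theorem isBounded_truncatedCone {B : Finset (ι → ℝ)} {a : ι → ℝ}
    (ha : ∀ u ∈ polyhedralCone B, u ≠ 0 → 0 < a ⬝ᵥ u) :
    Bornology.IsBounded (truncatedCone B a) := by
  -- `a` is bounded below by some `ε > 0` on the compact set of unit vectors of the cone
  obtain ⟨ε, hε, hεa⟩ := ((isCompact_sphere (0 : ι → ℝ) 1).inter_left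
    (isClosed_polyhedralCone B)).exists_forall_le' (f := (a ⬝ᵥ ·)) (by fun_prop)
    fun u hu => ha u hu.1 (ne_zero_of_mem_unit_sphere ⟨u, hu.2⟩)
  refine (Metric.isBounded_iff_subset_closedBall 0).2 ⟨ε⁻¹, fun u hu => ?_⟩
  rw [Metric.mem_closedBall, dist_zero_right, ← one_div, le_div_iff₀ hε]
  rcases eq_or_ne u 0 with rfl | hu0
  · simp
  have hnorm : 0 < ‖u‖ := norm_pos_iff.2 hu0
  have hunit : ‖u‖⁻¹ • u ∈ polyhedralCone B ∩ Metric.sphere 0 1 :=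
    ⟨smul_mem_polyhedralCone (inv_nonneg.2 hnorm.le) hu.1,
      by simp [norm_smul, hnorm.ne']⟩
  have := hεa _ hunit
  rw [dotProduct_smul, smul_eq_mul, le_inv_mul_iff₀ hnorm] at this
  exact this.trans hu.2

theorem volume_setOf_dotProduct_eq_zero {c : ι → ℝ} (hc : c ≠ 0) :
    volume {u : ι → ℝ | c ⬝ᵥ u = 0} = 0 := by
  refine Measure.addHaar_submodule volume (LinearMap.ker (dotProductBilin ℝ ℝ c)) fun h => hc ?_
  have : c ∈ LinearMap.ker (dotProductBilin ℝ ℝ c) := h ▸ Submodule.mem_top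
  simpa using this

theorem volume_polyhedralCone_of_zero_mem_convexHull {B : Finset (ι → ℝ)}
    (h : (0 : ι → ℝ) ∈ convexHull ℝ (B.erase 0 : Set (ι → ℝ))) :
    volume (polyhedralCone B) = 0 := by
  classical
  obtain ⟨w, hw0, hw1, hcm⟩ := Finset.mem_convexHull'.1 h
  obtain ⟨b₀, hb₀, hwb₀⟩ : ∃ b ∈ B.erase 0, w b ≠ 0 := by
    by_contra! hw
    simp [Finset.sum_eq_zero hw] at hw1
  -- a convex combination of nonnegative numbers `b ⬝ᵥ u` vanishes only if each term does
  refine measure_mono_null (fun u hu => ?_)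
    (volume_setOf_dotProduct_eq_zero (Finset.ne_of_mem_erase hb₀))
  have hsum : ∑ b ∈ B.erase 0, w b * (b ⬝ᵥ u) = 0 := by
    simpa [sum_dotProduct, smul_dotProduct] using congrArg (· ⬝ᵥ u) hcm
  rw [Finset.sum_eq_zero_iff_of_nonneg fun b hb =>
    mul_nonneg (hw0 b hb) (hu b (Finset.mem_of_mem_erase hb))] at hsum
  exact (mul_eq_zero.1 (hsum b₀ hb₀)).resolve_left hwb₀

theorem exists_ne_zero_forall_pos_dotProduct [Nonempty ι] {B : Finset (ι → ℝ)}
    (h : (0 : ι → ℝ) ∉ convexHull ℝ (B : Set (ι → ℝ))) :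
    ∃ e ≠ 0, ∀ b ∈ B, 0 < b ⬝ᵥ e := by
  classical
  obtain ⟨f, t, hft, ht⟩ := geometric_hahn_banach_closed_point (convex_convexHull ℝ _)
    (B.finite_toSet.isClosed_convexHull ℝ) h
  set g := (dotProductEquiv ℝ ι).symm f.toLinearMap
  have hf : ∀ b, f b = b ⬝ᵥ g := fun b => by
    rw [dotProduct_comm, ← dotProductEquiv_apply_apply, LinearEquiv.apply_symm_apply]
    rfl
  have hpos : ∀ b ∈ B, 0 < b ⬝ᵥ -g := fun b hb => by
    rw [dotProduct_neg, ← hf]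
    linarith [hft b (subset_convexHull ℝ _ hb), map_zero f]
  by_cases hg : g = 0
  · obtain ⟨e, he⟩ := exists_ne (0 : ι → ℝ)
    exact ⟨e, he, fun b hb => absurd (hpos b hb) (by simp [hg])⟩
  · exact ⟨-g, neg_ne_zero.2 hg, hpos⟩

theorem aedisjoint_polyhedralCone_image_sub {N : Finset (ι → ℝ)} {v v' : ι → ℝ} (hv : v ∈ N)
    (hv' : v' ∈ N) (hne : v ≠ v') :
    AEDisjoint volume (polyhedralCone (N.image (v - ·))) (polyhedralCone (N.image (v' - ·))) := by
  refine measure_mono_null (fun x ⟨hx, hx'⟩ => ?_)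
    (volume_setOf_dotProduct_eq_zero (sub_ne_zero.2 hne))
  have h₁ := mem_polyhedralCone_image_sub.1 hx v' hv'
  have h₂ := mem_polyhedralCone_image_sub.1 hx' v hv
  simp only [Set.mem_ofPred_eq, sub_dotProduct]
  linarith

theorem iUnion_polyhedralCone_image_sub {N : Finset (ι → ℝ)} (hN : N.Nonempty) :
    ⋃ v ∈ N, polyhedralCone (N.image (v - ·)) = Set.univ := by
  refine Set.eq_univ_of_forall fun x => ?_
  obtain ⟨v, hv, hmax⟩ := N.exists_max_image (· ⬝ᵥ x) hN
  exact Set.mem_biUnion hv (mem_polyhedralCone_image_sub.2 hmax)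

theorem mulVec_mem_polyhedralCone_iff (T : Matrix ι ι ℝ) (B : Finset (ι → ℝ)) (u : ι → ℝ) :
    T *ᵥ u ∈ polyhedralCone B ↔ u ∈ polyhedralCone (B.image (· ᵥ* T)) := by
  simp [polyhedralCone, dotProduct_mulVec]

theorem sup'_dotProduct_eq_of_mem_polyhedralCone_image_sub {N : Finset (ι → ℝ)} (hN : N.Nonempty)
    {v x : ι → ℝ} (hv : v ∈ N) (hx : x ∈ polyhedralCone (N.image (v - ·))) :
    N.sup' hN (· ⬝ᵥ x) = v ⬝ᵥ x :=
  le_antisymm (Finset.sup'_le _ _ (mem_polyhedralCone_image_sub.1 hx))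
    (Finset.le_sup' (· ⬝ᵥ x) hv)

end Cone

section Integral

variable {ι : Type*} [Fintype ι]

noncomputable def coneIntegral (B : Finset (ι → ℝ)) (a : ι → ℝ) (k : ℕ) : ℝ :=
  ∫ u in truncatedCone B a, (1 - a ⬝ᵥ u) ^ k

theorem coneIntegral_nonneg (B : Finset (ι → ℝ)) (a : ι → ℝ) (k : ℕ) : 0 ≤ coneIntegral B a k :=
  setIntegral_nonneg (measurableSet_truncatedCone B a) fun _ hu => pow_nonneg (sub_nonneg.2 hu.2) k

theorem coneIntegral_erase_zero (B : Finset (ι → ℝ)) (a : ι → ℝ) (k : ℕ) :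
    coneIntegral (B.erase 0) a k = coneIntegral B a k := by
  rw [coneIntegral, coneIntegral, truncatedCone, truncatedCone, polyhedralCone_erase_zero]

theorem integrableOn_truncatedCone {B : Finset (ι → ℝ)} {a : ι → ℝ}
    (ha : ∀ u ∈ polyhedralCone B, u ≠ 0 → 0 < a ⬝ᵥ u) {f : (ι → ℝ) → ℝ} (hf : Continuous f) :
    IntegrableOn f (truncatedCone B a) :=
  hf.continuousOn.integrableOn_compact <| Metric.isCompact_of_isClosed_isBounded
    (isClosed_truncatedCone B a) (isBounded_truncatedCone ha)

theorem volume_truncatedCone {B : Finset (ι → ℝ)} {a : ι → ℝ}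
    (ha : ∀ u ∈ polyhedralCone B, u ≠ 0 → 0 < a ⬝ᵥ u) :
    volume (truncatedCone B a) = ENNReal.ofReal (coneIntegral B a 0) := by
  simp only [coneIntegral, pow_zero, setIntegral_const, smul_eq_mul, mul_one]
  exact (ofReal_measureReal (isBounded_truncatedCone ha).measure_lt_top.ne).symm

theorem max_zero_sub_pow_eq_zero {B : Finset (ι → ℝ)} {a x : ι → ℝ} {k : ℕ} (hk : k ≠ 0)
    (hx : x ∈ polyhedralCone B \ truncatedCone B a) : max 0 (1 - a ⬝ᵥ x) ^ k = 0 := by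
  have : 1 < a ⬝ᵥ x := not_le.1 fun h => hx.2 ⟨hx.1, h⟩
  rw [max_eq_left (by linarith), zero_pow hk]

theorem integrableOn_polyhedralCone_max_pow {B : Finset (ι → ℝ)} {a : ι → ℝ}
    (ha : ∀ u ∈ polyhedralCone B, u ≠ 0 → 0 < a ⬝ᵥ u) {k : ℕ} (hk : k ≠ 0) :
    IntegrableOn (fun x => max 0 (1 - a ⬝ᵥ x) ^ k) (polyhedralCone B) :=
  (integrableOn_truncatedCone ha (by fun_prop)).of_forall_sdiff_eq_zero
    (isClosed_polyhedralCone B).measurableSet fun _ hx => max_zero_sub_pow_eq_zero hk hx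

theorem setIntegral_polyhedralCone_max_pow (B : Finset (ι → ℝ)) (a : ι → ℝ) {k : ℕ}
    (hk : k ≠ 0) : ∫ x in polyhedralCone B, max 0 (1 - a ⬝ᵥ x) ^ k = coneIntegral B a k := by
  rw [setIntegral_eq_of_subset_of_forall_sdiff_eq_zero (isClosed_polyhedralCone B).measurableSet
    Set.inter_subset_left fun _ hx => max_zero_sub_pow_eq_zero hk hx]
  refine setIntegral_congr_fun (measurableSet_truncatedCone B a) fun x hx => ?_
  rw [max_eq_right (sub_nonneg.2 hx.2)]

theorem det_one_updateCol [DecidableEq ι] (j : ι) (e : ι → ℝ) :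
    ((1 : Matrix ι ι ℝ).updateCol j e).det = e j := by
  rw [← cramer_apply, cramer_one]
  rfl

theorem integral_comp_mulVec [DecidableEq ι] {T : Matrix ι ι ℝ} (hT : T.det ≠ 0)
    {f : (ι → ℝ) → ℝ} (hf : Measurable f) : ∫ v, f (T *ᵥ v) = |T.det|⁻¹ * ∫ u, f u := by
  rw [show ∫ v, f (T *ᵥ v) = ∫ v, f (toLin' T v) from rfl,
    ← integral_map (toLin' T).continuous_of_finiteDimensional.aemeasurable hf.aestronglyMeasurable,
    Real.map_matrix_volume_pi_eq_smul_volume_pi hT, integral_smul_measure,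
    ENNReal.toReal_ofReal (by positivity), abs_inv, smul_eq_mul]

theorem preimage_mulVec_truncatedCone (T : Matrix ι ι ℝ) (B : Finset (ι → ℝ)) (a : ι → ℝ) :
    (T *ᵥ ·) ⁻¹' truncatedCone B a = truncatedCone (B.image (· ᵥ* T)) (a ᵥ* T) := by
  ext v
  simp [truncatedCone, ← mulVec_mem_polyhedralCone_iff, dotProduct_mulVec]

theorem coneIntegral_eq_abs_det_mul [DecidableEq ι] {T : Matrix ι ι ℝ} (hT : T.det ≠ 0)
    (B : Finset (ι → ℝ)) (a : ι → ℝ) (k : ℕ) :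
    coneIntegral B a k = |T.det| * coneIntegral (B.image (· ᵥ* T)) (a ᵥ* T) k := by
  have hS := measurableSet_truncatedCone B a
  have hinv : coneIntegral (B.image (· ᵥ* T)) (a ᵥ* T) k = |T.det|⁻¹ * coneIntegral B a k := by
    rw [coneIntegral, coneIntegral, ← preimage_mulVec_truncatedCone, ← integral_indicator
      (hS.preimage (by fun_prop : Continuous fun v : ι → ℝ => T *ᵥ v).measurable),
      ← integral_indicator hS,
      ← integral_comp_mulVec hT ((Measurable.pow_const (by fun_prop) k).indicator hS)]
    congr 1 with v
    rw [← Set.indicator_comp_right]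
    simp only [Function.comp_def, dotProduct_mulVec]
  rw [hinv, ← mul_assoc, mul_inv_cancel₀ (abs_ne_zero.2 hT), one_mul]

theorem integral_eq_integral_integral_insertNth {n : ℕ} (j : Fin (n + 1))
    {f : (Fin (n + 1) → ℝ) → ℝ} (hf : Integrable f) :
    ∫ u, f u = ∫ x, ∫ t, f (j.insertNth t x) := by
  have hmp := (volume_preserving_piFinSuccAbove (fun _ : Fin (n + 1) => ℝ) j).symm
  rw [← hmp.integral_comp' f]
  exact integral_prod_symm _ (hmp.integrable_comp_of_integrable hf)

theorem integral_Icc_sub_mul_pow {α : ℝ} (hα : 0 < α) (M c : ℝ) (k : ℕ) :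
    ∫ t in Set.Icc M (c / α), (c - α * t) ^ k = max 0 (c - α * M) ^ (k + 1) / (α * (k + 1)) := by
  rcases le_or_gt M (c / α) with hM | hM
  · have : 0 ≤ c - α * M := by rw [le_div_iff₀ hα] at hM; linarith
    rw [max_eq_right this, integral_Icc_eq_integral_Ioc, ← intervalIntegral.integral_of_le hM,
      intervalIntegral.integral_comp_sub_mul (fun t => t ^ k) hα.ne', integral_pow,
      mul_div_cancel₀ _ hα.ne', sub_self, zero_pow k.succ_ne_zero, sub_zero, smul_eq_mul]
    field_simp
  · have : c - α * M < 0 := by rw [div_lt_iff₀ hα] at hM; linarith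
    simp [Set.Icc_eq_empty_of_lt hM, max_eq_left this.le]

theorem integral_eq_sum_setIntegral_polyhedralCone_image_sub {N : Finset (ι → ℝ)} (hN : N.Nonempty)
    {f : (ι → ℝ) → ℝ} (hf : ∀ v ∈ N, IntegrableOn f (polyhedralCone (N.image (v - ·)))) :
    ∫ x, f x = ∑ v ∈ N, ∫ x in polyhedralCone (N.image (v - ·)), f x := by
  have hU : ⋃ v : N, polyhedralCone (N.image (v.1 - ·)) = Set.univ := by
    simpa [Set.iUnion_subtype] using iUnion_polyhedralCone_image_sub hN
  have hfU : IntegrableOn f (⋃ v : N, polyhedralCone (N.image (v.1 - ·))) :=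
    integrableOn_finite_iUnion.2 fun v => hf v v.2
  rw [← setIntegral_univ, ← hU,
    integral_iUnion_ae (fun _ => (isClosed_polyhedralCone _).measurableSet.nullMeasurableSet)
      (fun v v' h => aedisjoint_polyhedralCone_image_sub v.2 v'.2 (Subtype.coe_injective.ne h)) hfU,
    tsum_fintype]
  exact Finset.sum_coe_sort N fun v => ∫ x in polyhedralCone (N.image (v - ·)), f x

end Integral

section Slice

variable {n : ℕ} (j : Fin (n + 1))

theorem dotProduct_insertNth (a : Fin (n + 1) → ℝ) (t : ℝ) (x : Fin n → ℝ) :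
    a ⬝ᵥ j.insertNth t x = a j * t + j.removeNth a ⬝ᵥ x := by
  simp [dotProduct, Fin.sum_univ_succAbove _ j, Fin.removeNth]

theorem insertNth_mem_polyhedralCone_iff {B : Finset (Fin (n + 1) → ℝ)} (hB : ∀ b ∈ B, 0 < b j)
    (t : ℝ) (x : Fin n → ℝ) :
    j.insertNth t x ∈ polyhedralCone B ↔
      ∀ v ∈ B.image (fun b => -(b j)⁻¹ • j.removeNth b), v ⬝ᵥ x ≤ t := by
  simp only [polyhedralCone, Set.mem_ofPred_eq, Finset.forall_mem_image, dotProduct_insertNth,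
    smul_dotProduct, smul_eq_mul, neg_mul, neg_le]
  refine forall₂_congr fun b hb => ?_
  rw [le_inv_mul_iff₀ (hB b hb)]
  constructor <;> intro h <;> linarith

variable {j} {B : Finset (Fin (n + 1) → ℝ)} {N : Finset (Fin n → ℝ)}
  (hBN : ∀ t x, j.insertNth t x ∈ polyhedralCone B ↔ ∀ v ∈ N, v ⬝ᵥ x ≤ t)
include hBN

/-- Along the line `t ↦ j.insertNth t x` the truncated cone is the segment
`[N.sup' hN (· ⬝ᵥ x), (1 - j.removeNth a ⬝ᵥ x) / a j]`. -/
theorem integral_indicator_truncatedCone_insertNth {a : Fin (n + 1) → ℝ} (hN : N.Nonempty)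
    (hα : 0 < a j) (k : ℕ) (x : Fin n → ℝ) :
    ∫ t, (truncatedCone B a).indicator (fun u => (1 - a ⬝ᵥ u) ^ k) (j.insertNth t x) =
      max 0 (1 - j.removeNth a ⬝ᵥ x - a j * N.sup' hN (· ⬝ᵥ x)) ^ (k + 1) / (a j * (k + 1)) := by
  classical
  rw [← integral_Icc_sub_mul_pow hα, ← integral_indicator measurableSet_Icc]
  congr 1 with t
  have hmem : j.insertNth t x ∈ truncatedCone B a ↔
      t ∈ Set.Icc (N.sup' hN (· ⬝ᵥ x)) ((1 - j.removeNth a ⬝ᵥ x) / a j) := by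
    rw [truncatedCone, Set.mem_inter_iff, hBN, Set.mem_ofPred_eq, dotProduct_insertNth,
      Set.mem_Icc, Finset.sup'_le_iff, le_div_iff₀ hα, mul_comm t]
    exact and_congr Iff.rfl ⟨fun h => by linarith, fun h => by linarith⟩
  simp only [Set.indicator_apply, hmem, dotProduct_insertNth, sub_add_eq_sub_sub]
  rw [sub_right_comm]

variable {a : Fin (n + 1) → ℝ} (ha : ∀ u ∈ polyhedralCone B, u ≠ 0 → 0 < a ⬝ᵥ u)
include ha

theorem pos_apply_of_insertNth_mem_polyhedralCone_iff : 0 < a j := by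
  have hmem : j.insertNth 1 0 ∈ polyhedralCone B := (hBN 1 0).2 fun v _ => by simp
  have hne : (j.insertNth 1 0 : Fin (n + 1) → ℝ) ≠ 0 := fun h => by
    simpa using congrFun h j
  simpa [dotProduct_insertNth] using ha _ hmem hne

theorem nonempty_of_insertNth_mem_polyhedralCone_iff : N.Nonempty := by
  rw [Finset.nonempty_iff_ne_empty]
  rintro rfl
  refine polyhedralCone_ne_univ ha (Set.eq_univ_of_forall fun u => ?_)
  rw [← Fin.insertNth_self_removeNth j u, hBN]
  simp

theorem pos_dotProduct_of_insertNth_mem_polyhedralCone_iff {v x : Fin n → ℝ}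
    (hx : x ∈ polyhedralCone (N.image (v - ·))) (hx0 : x ≠ 0) :
    0 < (j.removeNth a + a j • v) ⬝ᵥ x := by
  have hmem : j.insertNth (v ⬝ᵥ x) x ∈ polyhedralCone B :=
    (hBN _ _).2 (mem_polyhedralCone_image_sub.1 hx)
  have hne : (j.insertNth (v ⬝ᵥ x) x : Fin (n + 1) → ℝ) ≠ 0 := fun h => hx0 <| by
    have := congrArg j.removeNth h
    rw [Fin.removeNth_insertNth] at this
    exact this
  have := ha _ hmem hne
  rw [dotProduct_insertNth] at this
  rw [add_dotProduct, smul_dotProduct, smul_eq_mul]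
  linarith

theorem coneIntegral_eq_inv_mul_sum (k : ℕ) :
    coneIntegral B a k = (a j * (k + 1))⁻¹ *
      ∑ v ∈ N, coneIntegral (N.image (v - ·)) (j.removeNth a + a j • v) (k + 1) := by
  have hα := pos_apply_of_insertNth_mem_polyhedralCone_iff hBN ha
  have hN := nonempty_of_insertNth_mem_polyhedralCone_iff hBN ha
  set c := j.removeNth a
  set M := fun x => N.sup' hN (· ⬝ᵥ x)
  have hcone : ∀ v ∈ N, ∀ x ∈ polyhedralCone (N.image (v - ·)),
      max 0 (1 - c ⬝ᵥ x - a j * M x) ^ (k + 1) = max 0 (1 - (c + a j • v) ⬝ᵥ x) ^ (k + 1) :=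
    fun v hv x hx => by
      rw [show M x = v ⬝ᵥ x from sup'_dotProduct_eq_of_mem_polyhedralCone_image_sub hN hv hx,
        add_dotProduct, smul_dotProduct, smul_eq_mul, sub_sub]
  have hint : ∀ v ∈ N, IntegrableOn (fun x => max 0 (1 - c ⬝ᵥ x - a j * M x) ^ (k + 1))
      (polyhedralCone (N.image (v - ·))) := fun v hv =>
    (integrableOn_polyhedralCone_max_pow (fun x hx hx0 =>
      pos_dotProduct_of_insertNth_mem_polyhedralCone_iff hBN ha hx hx0) k.succ_ne_zero).congr_fun
      (fun x hx => (hcone v hv x hx).symm) (isClosed_polyhedralCone _).measurableSet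
  calc coneIntegral B a k
      = ∫ u, (truncatedCone B a).indicator (fun u => (1 - a ⬝ᵥ u) ^ k) u :=
        (integral_indicator (measurableSet_truncatedCone B a)).symm
    _ = ∫ x, max 0 (1 - c ⬝ᵥ x - a j * M x) ^ (k + 1) / (a j * (k + 1)) := by
        rw [integral_eq_integral_integral_insertNth j ((integrableOn_truncatedCone ha
          (by fun_prop)).integrable_indicator (measurableSet_truncatedCone B a))]
        simp only [integral_indicator_truncatedCone_insertNth hBN hN hα, c, M]
    _ = (a j * (k + 1))⁻¹ * ∑ v ∈ N, ∫ x in polyhedralCone (N.image (v - ·)),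
          max 0 (1 - c ⬝ᵥ x - a j * M x) ^ (k + 1) := by
        rw [integral_div, integral_eq_sum_setIntegral_polyhedralCone_image_sub hN hint,
          div_eq_inv_mul]
    _ = _ := by
        congr 1
        refine Finset.sum_congr rfl fun v hv => ?_
        rw [← setIntegral_polyhedralCone_max_pow _ _ k.succ_ne_zero]
        exact setIntegral_congr_fun (isClosed_polyhedralCone _).measurableSet (hcone v hv)

end Slice

section Rational

variable {σ : Type*}

def IsRationalOn (s : Set (σ → ℝ)) (F : (σ → ℝ) → ℝ) : Prop :=
  ∃ p q : MvPolynomial σ ℝ, ∀ l ∈ s,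
    MvPolynomial.eval l q ≠ 0 ∧ F l = MvPolynomial.eval l p / MvPolynomial.eval l q

variable {s : Set (σ → ℝ)} {F G : (σ → ℝ) → ℝ}

theorem IsRationalOn.congr (hF : IsRationalOn s F) (h : ∀ l ∈ s, F l = G l) :
    IsRationalOn s G := by
  obtain ⟨p, q, hpq⟩ := hF
  exact ⟨p, q, fun l hl => ⟨(hpq l hl).1, (h l hl) ▸ (hpq l hl).2⟩⟩

theorem isRationalOn_eval (p : MvPolynomial σ ℝ) :
    IsRationalOn s fun l => MvPolynomial.eval l p :=
  ⟨p, 1, fun l _ => by simp⟩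

theorem isRationalOn_const (c : ℝ) : IsRationalOn s fun _ => c :=
  (isRationalOn_eval (MvPolynomial.C c)).congr fun _ _ => MvPolynomial.eval_C c

theorem IsRationalOn.add (hF : IsRationalOn s F) (hG : IsRationalOn s G) :
    IsRationalOn s (F + G) := by
  obtain ⟨p, q, hpq⟩ := hF
  obtain ⟨p', q', hpq'⟩ := hG
  refine ⟨p * q' + q * p', q * q', fun l hl => ?_⟩
  obtain ⟨hq, hF⟩ := hpq l hl
  obtain ⟨hq', hG⟩ := hpq' l hl
  simp only [map_add, map_mul, Pi.add_apply, hF, hG]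
  exact ⟨mul_ne_zero hq hq', div_add_div _ _ hq hq'⟩

theorem IsRationalOn.mul (hF : IsRationalOn s F) (hG : IsRationalOn s G) :
    IsRationalOn s fun l => F l * G l := by
  obtain ⟨p, q, hpq⟩ := hF
  obtain ⟨p', q', hpq'⟩ := hG
  refine ⟨p * p', q * q', fun l hl => ?_⟩
  obtain ⟨hq, hF⟩ := hpq l hl
  obtain ⟨hq', hG⟩ := hpq' l hl
  simp only [map_mul, hF, hG]
  exact ⟨mul_ne_zero hq hq', div_mul_div_comm _ _ _ _⟩

theorem IsRationalOn.inv (hF : IsRationalOn s F) (h : ∀ l ∈ s, F l ≠ 0) :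
    IsRationalOn s fun l => (F l)⁻¹ := by
  obtain ⟨p, q, hpq⟩ := hF
  refine ⟨q, p, fun l hl => ?_⟩
  obtain ⟨hq, hF⟩ := hpq l hl
  have := h l hl
  rw [hF] at this
  exact ⟨left_ne_zero_of_mul (by simpa [div_eq_mul_inv] using this), by simp only [hF, inv_div]⟩

theorem IsRationalOn.sum {ι : Type*} {t : Finset ι} {F : ι → (σ → ℝ) → ℝ}
    (h : ∀ i ∈ t, IsRationalOn s (F i)) : IsRationalOn s fun l => ∑ i ∈ t, F i l := by
  simp_rw [← Finset.sum_apply]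
  exact Finset.sum_induction F (IsRationalOn s) (fun _ _ => .add)
    ((isRationalOn_const 0).congr fun _ _ => rfl) h

end Rational

section Family

variable {σ : Type*} [Fintype σ] {s : Set (σ → ℝ)}

theorem removeNth_sum_smul_add_apply_smul {n : ℕ} (j : Fin (n + 1)) (l : σ → ℝ)
    (w : σ → Fin (n + 1) → ℝ) (v : Fin n → ℝ) :
    j.removeNth (∑ i, l i • w i) + (∑ i, l i • w i) j • v =
      ∑ i, l i • (j.removeNth (w i) + w i j • v) := by
  ext m
  simp [Fin.removeNth, Finset.sum_apply, Finset.sum_mul, Finset.sum_add_distrib, mul_assoc]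

theorem isRationalOn_coneIntegral_of_insertNth_mem_polyhedralCone_iff {n : ℕ} {j : Fin (n + 1)}
    {B : Finset (Fin (n + 1) → ℝ)} {N : Finset (Fin n → ℝ)}
    (hBN : ∀ t x, j.insertNth t x ∈ polyhedralCone B ↔ ∀ v ∈ N, v ⬝ᵥ x ≤ t)
    {w : σ → Fin (n + 1) → ℝ}
    (hw : ∀ l ∈ s, ∀ u ∈ polyhedralCone B, u ≠ 0 → 0 < (∑ i, l i • w i) ⬝ᵥ u) (k : ℕ)
    (hrec : ∀ v ∈ N,
      (∀ l ∈ s, ∀ x ∈ polyhedralCone (N.image (v - ·)), x ≠ 0 →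
        0 < (∑ i, l i • (j.removeNth (w i) + w i j • v)) ⬝ᵥ x) →
      IsRationalOn s fun l =>
        coneIntegral (N.image (v - ·)) (∑ i, l i • (j.removeNth (w i) + w i j • v)) (k + 1)) :
    IsRationalOn s fun l => coneIntegral B (∑ i, l i • w i) k := by
  have hα : IsRationalOn s fun l => (∑ i, l i • w i) j :=
    (isRationalOn_eval (∑ i, MvPolynomial.C (w i j) * MvPolynomial.X i)).congr fun l _ => by
      simp [Finset.sum_apply, mul_comm]
  have hrec' := IsRationalOn.sum fun v hv => hrec v hv fun l hl x hx hx0 => by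
    rw [← removeNth_sum_smul_add_apply_smul]
    exact pos_dotProduct_of_insertNth_mem_polyhedralCone_iff hBN (hw l hl) hx hx0
  refine (((hα.mul (isRationalOn_const ((k : ℝ) + 1))).inv fun l hl => ?_).mul hrec').congr
    fun l hl => ?_
  · exact mul_ne_zero (pos_apply_of_insertNth_mem_polyhedralCone_iff hBN (hw l hl)).ne'
      (by positivity)
  · simp only [coneIntegral_eq_inv_mul_sum hBN (hw l hl), removeNth_sum_smul_add_apply_smul]

theorem isRationalOn_coneIntegral {n : ℕ} (k : ℕ) (B : Finset (Fin n → ℝ)) (w : σ → Fin n → ℝ)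
    (hw : ∀ l ∈ s, ∀ u ∈ polyhedralCone B, u ≠ 0 → 0 < (∑ i, l i • w i) ⬝ᵥ u) :
    IsRationalOn s fun l => coneIntegral B (∑ i, l i • w i) k := by
  induction n generalizing k with
  | zero =>
    refine (isRationalOn_const 1).congr fun l _ => ?_
    simp [coneIntegral, truncatedCone, polyhedralCone, dotProduct, measureReal_def, volume_pi]
  | succ n ih =>
    classical
    by_cases h0 : (0 : Fin (n + 1) → ℝ) ∈ convexHull ℝ (B.erase 0 : Set (Fin (n + 1) → ℝ))
    · refine (isRationalOn_const 0).congr fun l _ => (setIntegral_measure_zero _ ?_).symm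
      exact measure_mono_null Set.inter_subset_left
        (volume_polyhedralCone_of_zero_mem_convexHull h0)
    obtain ⟨e, he0, he⟩ := exists_ne_zero_forall_pos_dotProduct h0
    obtain ⟨j, hj⟩ := Function.ne_iff.1 he0
    -- in the coordinates `v = T⁻¹ u` the direction `e` becomes the `j`-th basis vector
    set T := (1 : Matrix (Fin (n + 1)) (Fin (n + 1)) ℝ).updateCol j e
    have hT : T.det ≠ 0 := by rwa [det_one_updateCol]
    have hB : ∀ b ∈ (B.erase 0).image (· ᵥ* T), 0 < b j :=
      Finset.forall_mem_image.2 fun b hb => by simpa [T, vecMul_updateCol] using he b hb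
    have hwT : ∀ l ∈ s, ∀ u ∈ polyhedralCone ((B.erase 0).image (· ᵥ* T)), u ≠ 0 →
        0 < (∑ i, l i • (w i ᵥ* T)) ⬝ᵥ u := fun l hl u hu hu0 => by
      simp_rw [← smul_vecMul, ← sum_vecMul, ← dotProduct_mulVec]
      refine hw l hl _ ?_ fun h => hu0 (eq_zero_of_mulVec_eq_zero hT h)
      rwa [← polyhedralCone_erase_zero, mulVec_mem_polyhedralCone_iff]
    refine ((isRationalOn_const |T.det|).mul
      (isRationalOn_coneIntegral_of_insertNth_mem_polyhedralCone_iff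
        (insertNth_mem_polyhedralCone_iff j hB) hwT k fun v _ hv => ih (k + 1) _ _ hv)).congr
      fun l _ => ?_
    simp only [← coneIntegral_erase_zero B, coneIntegral_eq_abs_det_mul hT (B.erase 0),
      sum_vecMul, smul_vecMul]

end Family

theorem nonempty_of_mem_sum_smul_convexHull {ι σ : Type*} [Fintype σ] {V : σ → Finset (ι → ℝ)}
    {l : σ → ℝ} {c : ι → ℝ} (hc : c ∈ ∑ i, l i • convexHull ℝ (V i : Set (ι → ℝ))) (i : σ) :
    (V i).Nonempty := by
  obtain ⟨g, hg, -⟩ := (Set.mem_finsetSum _ _ _).1 hc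
  obtain ⟨y, hy, -⟩ := hg (Finset.mem_univ i)
  exact Finset.coe_nonempty.1 (convexHull_nonempty_iff.1 ⟨y, hy⟩)

theorem sum_smul_mem_sum_smul_convexHull {ι σ : Type*} [Fintype σ] [DecidableEq σ]
    {V : σ → Finset (ι → ℝ)} {f : σ → ι → ℝ} (hf : f ∈ Fintype.piFinset V) (l : σ → ℝ) :
    ∑ i, l i • f i ∈ ∑ i, l i • convexHull ℝ (V i : Set (ι → ℝ)) :=
  Set.finsetSum_mem_finsetSum _ _ _ fun i _ =>
    Set.smul_mem_smul_set (subset_convexHull ℝ _ (Fintype.mem_piFinset.1 hf i))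

section Polar

variable {ι σ : Type*} [Fintype ι] [Fintype σ]

def polarBody (S : Set (ι → ℝ)) : Set (ι → ℝ) := {u | ∀ c ∈ S, c ⬝ᵥ u ≤ 1}

/-- For `f` a choice of vertices `f i ∈ V i`, the polyhedral cone of these generators is the set
of directions `u` in which every `f i` maximizes `· ⬝ᵥ u` over `V i`. -/
noncomputable def normalGenerators (V : σ → Finset (ι → ℝ)) (f : σ → ι → ℝ) : Finset (ι → ℝ) :=
  Finset.univ.biUnion fun i => (V i).image (f i - ·)

theorem mem_polyhedralCone_normalGenerators {V : σ → Finset (ι → ℝ)} {f : σ → ι → ℝ}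
    {u : ι → ℝ} :
    u ∈ polyhedralCone (normalGenerators V f) ↔
      ∀ i, u ∈ polyhedralCone ((V i).image (f i - ·)) := by
  simp only [polyhedralCone, normalGenerators, Set.mem_ofPred_eq, Finset.mem_biUnion,
    Finset.mem_univ, true_and]
  exact ⟨fun h i b hb => h b ⟨i, hb⟩, fun h b ⟨i, hb⟩ => h i b hb⟩

theorem dotProduct_le_of_mem_sum_smul_convexHull {V : σ → Finset (ι → ℝ)} {f : σ → ι → ℝ}
    {l : σ → ℝ} (hl : ∀ i, 0 ≤ l i) {u c : ι → ℝ}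
    (hu : u ∈ polyhedralCone (normalGenerators V f))
    (hc : c ∈ ∑ i, l i • convexHull ℝ (V i : Set (ι → ℝ))) :
    c ⬝ᵥ u ≤ (∑ i, l i • f i) ⬝ᵥ u := by
  obtain ⟨g, hg, rfl⟩ := (Set.mem_finsetSum _ _ _).1 hc
  rw [sum_dotProduct, sum_dotProduct]
  refine Finset.sum_le_sum fun i _ => ?_
  obtain ⟨y, hy, hyg⟩ := hg (Finset.mem_univ i)
  dsimp only at hyg
  rw [← hyg, smul_dotProduct, smul_dotProduct, smul_eq_mul, smul_eq_mul]
  refine mul_le_mul_of_nonneg_left ?_ (hl i)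
  have hconv : Convex ℝ {y : ι → ℝ | y ⬝ᵥ u ≤ f i ⬝ᵥ u} :=
    convex_halfSpace_le ⟨fun x y => add_dotProduct x y u, fun c x => smul_dotProduct c x u⟩ _
  exact convexHull_min (fun v hv =>
    mem_polyhedralCone_image_sub.1 (mem_polyhedralCone_normalGenerators.1 hu i) v hv) hconv hy

theorem polarBody_sum_smul_convexHull [DecidableEq σ] {V : σ → Finset (ι → ℝ)}
    (hV : ∀ i, (V i).Nonempty) {l : σ → ℝ} (hl : ∀ i, 0 ≤ l i) :
    polarBody (∑ i, l i • convexHull ℝ (V i : Set (ι → ℝ))) =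
      ⋃ f ∈ Fintype.piFinset V, truncatedCone (normalGenerators V f) (∑ i, l i • f i) := by
  ext u
  simp only [Set.mem_iUnion, exists_prop]
  refine ⟨fun hu => ?_, fun ⟨f, _, hu, hu1⟩ c hc =>
    (dotProduct_le_of_mem_sum_smul_convexHull hl hu hc).trans hu1⟩
  choose f hfV hfmax using fun i => (V i).exists_max_image (· ⬝ᵥ u) (hV i)
  have hf : f ∈ Fintype.piFinset V := Fintype.mem_piFinset.2 hfV
  exact ⟨f, hf, mem_polyhedralCone_normalGenerators.2 fun i =>
    mem_polyhedralCone_image_sub.2 (hfmax i), hu _ (sum_smul_mem_sum_smul_convexHull hf l)⟩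

theorem pos_dotProduct_of_zero_mem_interior {V : σ → Finset (ι → ℝ)} {f : σ → ι → ℝ}
    {l : σ → ℝ} (hl : ∀ i, 0 ≤ l i)
    (h0 : (0 : ι → ℝ) ∈ interior (∑ i, l i • convexHull ℝ (V i : Set (ι → ℝ))))
    {u : ι → ℝ} (hu : u ∈ polyhedralCone (normalGenerators V f)) (hu0 : u ≠ 0) :
    0 < (∑ i, l i • f i) ⬝ᵥ u := by
  obtain ⟨δ, hδ, hδu⟩ : ∃ δ > 0, δ • u ∈ ∑ i, l i • convexHull ℝ (V i : Set (ι → ℝ)) :=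
    ((Continuous.tendsto (by fun_prop : Continuous fun δ : ℝ => δ • u) 0).eventually
      (mem_interior_iff_mem_nhds.1 (by simpa using h0))).exists_gt
  have hle := dotProduct_le_of_mem_sum_smul_convexHull hl hu hδu
  rw [smul_dotProduct, smul_eq_mul] at hle
  have huu : 0 < u ⬝ᵥ u := lt_of_le_of_ne (Finset.sum_nonneg fun i _ => mul_self_nonneg (u i))
    (Ne.symm (dotProduct_self_eq_zero.not.2 hu0))
  exact (mul_pos hδ huu).trans_le hle

theorem aedisjoint_polyhedralCone_normalGenerators [DecidableEq σ] {V : σ → Finset (ι → ℝ)}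
    {f f' : σ → ι → ℝ} (hf : f ∈ Fintype.piFinset V) (hf' : f' ∈ Fintype.piFinset V)
    (hne : f ≠ f') :
    AEDisjoint volume (polyhedralCone (normalGenerators V f))
      (polyhedralCone (normalGenerators V f')) := by
  obtain ⟨i, hi⟩ := Function.ne_iff.1 hne
  exact (aedisjoint_polyhedralCone_image_sub (Fintype.mem_piFinset.1 hf i)
    (Fintype.mem_piFinset.1 hf' i) hi).mono
    (fun _ hu => mem_polyhedralCone_normalGenerators.1 hu i)
    (fun _ hu => mem_polyhedralCone_normalGenerators.1 hu i)

theorem volume_polarBody_sum_smul_convexHull [DecidableEq σ] {V : σ → Finset (ι → ℝ)} {l : σ → ℝ}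
    (hl : ∀ i, 0 ≤ l i)
    (h0 : (0 : ι → ℝ) ∈ interior (∑ i, l i • convexHull ℝ (V i : Set (ι → ℝ)))) :
    volume (polarBody (∑ i, l i • convexHull ℝ (V i : Set (ι → ℝ)))) =
      ENNReal.ofReal (∑ f ∈ Fintype.piFinset V,
        coneIntegral (normalGenerators V f) (∑ i, l i • f i) 0) := by
  rw [polarBody_sum_smul_convexHull (nonempty_of_mem_sum_smul_convexHull (interior_subset h0)) hl,
    measure_biUnion_finset₀ (f := fun f => truncatedCone (normalGenerators V f) (∑ i, l i • f i))
      (fun f hf f' hf' hne => (aedisjoint_polyhedralCone_normalGenerators hf hf' hne).mono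
        Set.inter_subset_left Set.inter_subset_left)
      fun f _ => (measurableSet_truncatedCone _ _).nullMeasurableSet,
    ENNReal.ofReal_sum_of_nonneg fun f _ => coneIntegral_nonneg _ _ 0]
  exact Finset.sum_congr rfl fun f _ =>
    volume_truncatedCone fun u hu hu0 => pos_dotProduct_of_zero_mem_interior hl h0 hu hu0

end Polar

/-- The dual mixed volume of polytopes is a rational function: given convex polytopes
`P₁, …, P_r ⊂ ℝ^d` such that for all `λ` with positive entries the Minkowski sum
`λ₁P₁ + ⋯ + λ_rP_r` contains the origin in its interior, there are polynomials `p, q`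
in `λ₁, …, λ_r`, with `q` nonvanishing on the open positive orthant, such that for all
positive `λ` the Lebesgue volume of the polar body `(λ₁P₁ + ⋯ + λ_rP_r)^∨` equals
`p(λ)/q(λ)`. -/
theorem dual_mixed_volume_rational (d r : ℕ) (V : Fin r → Finset (Fin d → ℝ))
    (P : Fin r → Set (Fin d → ℝ))
    (hP : ∀ i, P i = convexHull ℝ ((V i : Set (Fin d → ℝ))))
    (h0 : ∀ l : Fin r → ℝ, (∀ i, 0 < l i) → (0 : Fin d → ℝ) ∈ interior (∑ i, l i • P i)) :
    ∃ p q : MvPolynomial (Fin r) ℝ,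
      (∀ l : Fin r → ℝ, (∀ i, 0 < l i) → MvPolynomial.eval l q ≠ 0) ∧
      ∀ l : Fin r → ℝ, (∀ i, 0 < l i) →
        volume {u : Fin d → ℝ | ∀ c ∈ (∑ i, l i • P i), ∑ k, c k * u k ≤ 1} =
          ENNReal.ofReal (MvPolynomial.eval l p / MvPolynomial.eval l q) := by
  obtain rfl : P = fun i => convexHull ℝ (V i : Set (Fin d → ℝ)) := funext hP
  obtain ⟨p, q, hpq⟩ := IsRationalOn.sum (s := {l | ∀ i, 0 < l i}) fun f _ =>
    isRationalOn_coneIntegral 0 (normalGenerators V f) f fun l hl _ hu hu0 =>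
      pos_dotProduct_of_zero_mem_interior (fun i => (hl i).le) (h0 l hl) hu hu0
  refine ⟨p, q, fun l hl => (hpq l hl).1, fun l hl => ?_⟩
  rw [← (hpq l hl).2]
  exact volume_polarBody_sum_smul_convexHull (fun i => (hl i).le) (h0 l hl)
end
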